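/- Let Φ = (φ₁,...,φ_m) : ℂ → ℂᵐ be a polynomial mapping with d := max_j deg φ_j, and let p := φ₁·…·φ_m. Then for every t₀ ∈ ℂ, |Φ(t₀)| ≥ 2^{-d} · min{|Φ(τ)| : τ ∈ ℂ, p(τ) = 0}, provided p is not identically zero and has at least one root; here |Φ(t)| := max_j |φ_j(t)|. -/
import Mathlib


/-- **Lemma (cf. [CK₂, Lemma 2]).** For a polynomial mapping `Φ = (φ₁,…,φ_m) : ℂ → ℂᵐ`
with `d = max_j deg φ_j` and `p = φ₁⋯φ_m` not identically zero and having a root,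
every value `|Φ(t₀)|` is at least `2^{-d}` times the minimum of `|Φ|` over the roots
of `p` (the minimum being attained at some root `τ`). -/
theorem polynomial_map_ge_min_on_roots
    {m : ℕ} (φ : Fin m → Polynomial ℂ)
    (d : ℕ) (hd : d = Finset.univ.sup fun j => (φ j).natDegree)
    (p : Polynomial ℂ) (hp : p = ∏ j, φ j) (hp0 : p ≠ 0)
    (hroot : ∃ τ : ℂ, p.eval τ = 0) (t₀ : ℂ) :
    ∃ τ : ℂ, p.eval τ = 0 ∧
      (∀ σ : ℂ, p.eval σ = 0 →
        ‖(fun j => (φ j).eval τ : Fin m → ℂ)‖ ≤ ‖(fun j => (φ j).eval σ : Fin m → ℂ)‖) ∧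
      (2 : ℝ) ^ (-(d : ℤ)) * ‖(fun j => (φ j).eval τ : Fin m → ℂ)‖ ≤
        ‖(fun j => (φ j).eval t₀ : Fin m → ℂ)‖ := by
  obtain ⟨τ₀, hτ₀⟩ := hroot
  set S := p.roots.toFinset with hS
  have hmemS : ∀ σ : ℂ, p.eval σ = 0 ↔ σ ∈ S := by
    intro σ
    rw [hS, Multiset.mem_toFinset, Polynomial.mem_roots hp0]
    exact ⟨fun h => h, fun h => h⟩
  have hSne : S.Nonempty := ⟨τ₀, (hmemS τ₀).1 hτ₀⟩
  obtain ⟨τ, hτS, hτmin⟩ :=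
    S.exists_min_image (fun σ => ‖(fun j => (φ j).eval σ : Fin m → ℂ)‖) hSne
  obtain ⟨τ', hτ'S, hτ'min⟩ := S.exists_min_image (fun σ => ‖t₀ - σ‖) hSne
  refine ⟨τ, (hmemS τ).2 hτS, fun σ hσ => hτmin σ ((hmemS σ).1 hσ), ?_⟩
  have key : ∀ j, ‖(φ j).eval τ'‖ ≤ 2 ^ d * ‖(φ j).eval t₀‖ := by
    intro j
    have hsplit := Polynomial.C_leadingCoeff_mul_prod_multiset_X_sub_C
      ((Polynomial.splits_iff_card_roots).1 (IsAlgClosed.splits (φ j)))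
    have heval : ∀ t : ℂ, ‖(φ j).eval t‖
        = ‖(φ j).leadingCoeff‖ * (((φ j).roots).map (fun a => ‖t - a‖)).prod := by
      intro t
      conv_lhs => rw [← hsplit]
      rw [Polynomial.eval_mul, Polynomial.eval_C, norm_mul, Polynomial.eval_multiset_prod,
        Multiset.map_map]
      have hn : ∀ (s : Multiset ℂ), ‖s.prod‖ = (s.map (fun z => ‖z‖)).prod := by
        intro s
        induction s using Multiset.induction with
        | empty => simp
        | cons a s ih => simp [norm_mul, ih]
      rw [hn, Multiset.map_map]
      congr 1
      exact congrArg Multiset.prod (Multiset.map_congr rfl (fun a _ => by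
        simp [Function.comp]))
    -- each root of φ j is a root of p
    have hra : ∀ a ∈ (φ j).roots, ‖t₀ - τ'‖ ≤ ‖t₀ - a‖ := by
      intro a ha
      have haroot : (φ j).eval a = 0 := Polynomial.isRoot_of_mem_roots ha
      have hpa : p.eval a = 0 := by
        rw [hp, Polynomial.eval_prod]
        exact Finset.prod_eq_zero (Finset.mem_univ j) haroot
      exact hτ'min a ((hmemS a).1 hpa)
    have hbound : ∀ a ∈ (φ j).roots, ‖τ' - a‖ ≤ 2 * ‖t₀ - a‖ := by
      intro a ha
      calc ‖τ' - a‖ ≤ ‖τ' - t₀‖ + ‖t₀ - a‖ := by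
            simpa using norm_sub_le_norm_sub_add_norm_sub τ' t₀ a
        _ ≤ ‖t₀ - a‖ + ‖t₀ - a‖ := by
            have := hra a ha
            rw [norm_sub_rev] at this
            linarith
        _ = 2 * ‖t₀ - a‖ := by ring
    have hcard : ((φ j).roots).card ≤ d := by
      have h1 : ((φ j).roots).card ≤ (φ j).natDegree := (φ j).card_roots'
      have h2 : (φ j).natDegree ≤ d := by
        rw [hd]; exact Finset.le_sup (f := fun j => (φ j).natDegree) (Finset.mem_univ j)
      omega
    have hprod : (((φ j).roots).map (fun a => ‖τ' - a‖)).prod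
        ≤ 2 ^ d * (((φ j).roots).map (fun a => ‖t₀ - a‖)).prod := by
      calc (((φ j).roots).map (fun a => ‖τ' - a‖)).prod
          ≤ (((φ j).roots).map (fun a => 2 * ‖t₀ - a‖)).prod := by
            apply Multiset.prod_map_le_prod_map₀
            · intro a _; positivity
            · exact hbound
        _ = 2 ^ ((φ j).roots).card * (((φ j).roots).map (fun a => ‖t₀ - a‖)).prod := by
            rw [Multiset.prod_map_mul]
            simp [Multiset.map_const']
        _ ≤ 2 ^ d * (((φ j).roots).map (fun a => ‖t₀ - a‖)).prod := by
            apply mul_le_mul_of_nonneg_right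
            · exact pow_le_pow_right₀ one_le_two hcard
            · exact Multiset.prod_nonneg (by
                intro x hx
                obtain ⟨a, _, rfl⟩ := Multiset.mem_map.1 hx
                positivity)
    rw [heval τ', heval t₀]
    calc ‖(φ j).leadingCoeff‖ * (((φ j).roots).map (fun a => ‖τ' - a‖)).prod
        ≤ ‖(φ j).leadingCoeff‖ * (2 ^ d * (((φ j).roots).map (fun a => ‖t₀ - a‖)).prod) :=
          mul_le_mul_of_nonneg_left hprod (norm_nonneg _)
      _ = 2 ^ d * (‖(φ j).leadingCoeff‖ * (((φ j).roots).map (fun a => ‖t₀ - a‖)).prod) := by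
          ring
  -- combine
  have hnorm : ‖(fun j => (φ j).eval τ' : Fin m → ℂ)‖
      ≤ 2 ^ d * ‖(fun j => (φ j).eval t₀ : Fin m → ℂ)‖ := by
    apply pi_norm_le_iff_of_nonneg (by positivity) |>.2
    intro j
    calc ‖(φ j).eval τ'‖ ≤ 2 ^ d * ‖(φ j).eval t₀‖ := key j
      _ ≤ 2 ^ d * ‖(fun j => (φ j).eval t₀ : Fin m → ℂ)‖ := by
          apply mul_le_mul_of_nonneg_left _ (by positivity)
          exact norm_le_pi_norm (fun j => (φ j).eval t₀ : Fin m → ℂ) j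
  have hτle : ‖(fun j => (φ j).eval τ : Fin m → ℂ)‖
      ≤ ‖(fun j => (φ j).eval τ' : Fin m → ℂ)‖ := hτmin τ' hτ'S
  have h2d : (2 : ℝ) ^ (-(d : ℤ)) = ((2 : ℝ) ^ d)⁻¹ := by
    rw [zpow_neg, zpow_natCast]
  rw [h2d, inv_mul_le_iff₀ (by positivity)]
  calc ‖(fun j => (φ j).eval τ : Fin m → ℂ)‖
      ≤ ‖(fun j => (φ j).eval τ' : Fin m → ℂ)‖ := hτle
    _ ≤ 2 ^ d * ‖(fun j => (φ j).eval t₀ : Fin m → ℂ)‖ := hnorm
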